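/- arXiv:2502.15703 — 2 statements merged into one kernel-verified Lean document; each statement's English description precedes it below -/
import Mathlib

section
/- Let U, V, W be vector spaces over ℝ (or over any commutative ring) and let u₁, u₂ ∈ U, v₁, v₂ ∈ V, w₁, w₂ ∈ W. Then in U ⊗ V ⊗ W the following identity holds: u₁ ⊗ v₁ ⊗ w₁ + u₁ ⊗ v₂ ⊗ w₂ − u₂ ⊗ v₁ ⊗ w₂ + u₂ ⊗ v₂ ⊗ w₁ = u₁ ⊗ v₁ ⊗ (w₁ − w₂) + u₂ ⊗ v₂ ⊗ (w₁ + w₂) + (u₁ − u₂) ⊗ (v₁ + v₂) ⊗ w₂. -/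
open TensorProduct

/-- Refactoring a four-term tensor product expression into three terms in `U ⊗ V ⊗ W`. -/
theorem tensor_refactor_three_terms
    {U V W : Type*} [AddCommGroup U] [Module ℝ U] [AddCommGroup V] [Module ℝ V]
    [AddCommGroup W] [Module ℝ W]
    (u₁ u₂ : U) (v₁ v₂ : V) (w₁ w₂ : W) :
    (u₁ ⊗ₜ[ℝ] v₁) ⊗ₜ[ℝ] w₁ + (u₁ ⊗ₜ[ℝ] v₂) ⊗ₜ[ℝ] w₂ - (u₂ ⊗ₜ[ℝ] v₁) ⊗ₜ[ℝ] w₂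
      + (u₂ ⊗ₜ[ℝ] v₂) ⊗ₜ[ℝ] w₁ =
    (u₁ ⊗ₜ[ℝ] v₁) ⊗ₜ[ℝ] (w₁ - w₂) + (u₂ ⊗ₜ[ℝ] v₂) ⊗ₜ[ℝ] (w₁ + w₂)
      + ((u₁ - u₂) ⊗ₜ[ℝ] (v₁ + v₂)) ⊗ₜ[ℝ] w₂ := by
  simp only [TensorProduct.sub_tmul, TensorProduct.add_tmul, TensorProduct.tmul_sub, TensorProduct.tmul_add]
  abel
end

section
/- Let U, V, W be vector spaces over ℂ and let u₁, u₂ ∈ U, v₁, v₂ ∈ V, w₁, w₂ ∈ W. Then in U ⊗ V ⊗ W the following identity holds: u₁ ⊗ v₁ ⊗ w₁ + u₁ ⊗ v₂ ⊗ w₂ − u₂ ⊗ v₁ ⊗ w₂ + u₂ ⊗ v₂ ⊗ w₁ = (1/2) · ((u₁ − i·u₂) ⊗ (v₁ + i·v₂) ⊗ (w₁ − i·w₂) + (u₁ + i·u₂) ⊗ (v₁ − i·v₂) ⊗ (w₁ + i·w₂)). -/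
open TensorProduct Complex

/-- Refactoring a four-term tensor product expression into two terms over `ℂ`. -/
theorem tensor_refactor_two_terms_complex
    {U V W : Type*} [AddCommGroup U] [Module ℂ U] [AddCommGroup V] [Module ℂ V]
    [AddCommGroup W] [Module ℂ W]
    (u₁ u₂ : U) (v₁ v₂ : V) (w₁ w₂ : W) :
    (u₁ ⊗ₜ[ℂ] v₁) ⊗ₜ[ℂ] w₁ + (u₁ ⊗ₜ[ℂ] v₂) ⊗ₜ[ℂ] w₂ - (u₂ ⊗ₜ[ℂ] v₁) ⊗ₜ[ℂ] w₂
      + (u₂ ⊗ₜ[ℂ] v₂) ⊗ₜ[ℂ] w₁ =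
    ((1 : ℂ) / 2) • (((u₁ - Complex.I • u₂) ⊗ₜ[ℂ] (v₁ + Complex.I • v₂)) ⊗ₜ[ℂ]
        (w₁ - Complex.I • w₂)
      + ((u₁ + Complex.I • u₂) ⊗ₜ[ℂ] (v₁ - Complex.I • v₂)) ⊗ₜ[ℂ]
        (w₁ + Complex.I • w₂)) := by
  simp only [tmul_add, add_tmul, tmul_sub, sub_tmul, ← smul_tmul', tmul_smul, smul_smul]
  match_scalars <;> simp [Complex.ext_iff] <;> ring
end
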